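/- For any self-conjugate a ∈ ℤ[x,x⁻¹] (i.e. a(x) = a(x⁻¹)), the augmented integer matrix ε(L(a)) obtained by setting x = 1 in the matrix with rows (1+a+a², a+a², 1+a, a), (a+a², 1+a+a², a, 1+a), (1+a, a, 2, 0), (a, 1+a, 0, 2) is an odd positive definite unimodular matrix of rank 4, hence congruent over ℤ to the identity matrix. -/

import Mathlib

open Matrix

noncomputable section

/-- The Laurent polynomial ring `Λ = ℤ[x,x⁻¹]` as the group ring `ℤ[ℤ]`. -/
abbrev Lau := AddMonoidAlgebra ℤ ℤ

/-- The augmentation `ε : Λ → ℤ`, `x ↦ 1` (sum of coefficients). -/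
def aug (a : Lau) : ℤ := Finsupp.sum a.coeff fun _ c => c

/-- The augmented matrix `ε(L(a))`, obtained by substituting `α = ε(a)` for `t`. -/
def epsLmat (α : ℤ) : Matrix (Fin 4) (Fin 4) ℤ :=
  !![1 + α + α ^ 2, α + α ^ 2, 1 + α, α;
     α + α ^ 2, 1 + α + α ^ 2, α, 1 + α;
     1 + α, α, 2, 0;
     α, 1 + α, 0, 2]

/-
Doubling the quadratic form `Q` of `ε(L(a))`, with `α = ε(a)`, gives the sum of squares
`x₀² + x₁² + ((1+α)x₀ + αx₁ + 2x₂)² + (αx₀ + (1+α)x₁ + 2x₃)²` (the block decomposition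
`[[(I+B²)/2, B], [B, 2I]]`), so `Q` is positive definite, and `Q(e₀) = 1 + α + α²` is odd.
Replacing `α` by `α + 2k` amounts to the integral change of variables `x₂ ↦ x₂ + k(x₀+x₁)`,
`x₃ ↦ x₃ + k(x₀+x₁)`, so it suffices to diagonalise `ε(L(a))` for `α = 0` and `α = 1`.
Congruence to the identity then forces unimodularity.
-/

namespace Matrix

variable {R n : Type*} [CommRing R] [Fintype n] [DecidableEq n]

theorem isUnit_det_of_mul_mul_transpose_eq_one {P A : Matrix n n R} (h : P * A * Pᵀ = 1) :
    IsUnit P.det ∧ IsUnit A.det := by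
  have hdet := congrArg det h
  rw [det_mul, det_mul, det_transpose, det_one] at hdet
  exact ⟨.of_mul_eq_one (A.det * P.det) (by linear_combination hdet),
    .of_mul_eq_one (P.det * P.det) (by linear_combination hdet)⟩

end Matrix

theorem two_mul_dotProduct_epsLmat_mulVec (α : ℤ) (v : Fin 4 → ℤ) :
    2 * (v ⬝ᵥ epsLmat α *ᵥ v) =
      v 0 ^ 2 + v 1 ^ 2 + ((1 + α) * v 0 + α * v 1 + 2 * v 2) ^ 2
        + (α * v 0 + (1 + α) * v 1 + 2 * v 3) ^ 2 := by
  simp only [epsLmat, dotProduct, mulVec, Fin.sum_univ_four, of_apply, cons_val', cons_val,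
    empty_val', cons_val_fin_one]
  ring

theorem dotProduct_epsLmat_mulVec_pos (α : ℤ) {v : Fin 4 → ℤ} (hv : v ≠ 0) :
    0 < v ⬝ᵥ epsLmat α *ᵥ v := by
  have hsum := two_mul_dotProduct_epsLmat_mulVec α v
  by_contra! hle
  obtain ⟨h0, h1, h2, h3⟩ : v 0 = 0 ∧ v 1 = 0 ∧ (1 + α) * v 0 + α * v 1 + 2 * v 2 = 0 ∧
      α * v 0 + (1 + α) * v 1 + 2 * v 3 = 0 := by
    refine ⟨?_, ?_, ?_, ?_⟩ <;> refine pow_eq_zero_iff two_ne_zero |>.mp ?_ <;>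
      nlinarith [sq_nonneg (v 0), sq_nonneg (v 1),
        sq_nonneg ((1 + α) * v 0 + α * v 1 + 2 * v 2), sq_nonneg (α * v 0 + (1 + α) * v 1 + 2 * v 3)]
  simp only [h0, h1, mul_zero, zero_add, mul_eq_zero, two_ne_zero, false_or] at h2 h3
  exact hv (by ext i; fin_cases i <;> assumption)

theorem odd_dotProduct_epsLmat_mulVec_single (α : ℤ) :
    Odd (Pi.single 0 1 ⬝ᵥ epsLmat α *ᵥ Pi.single (0 : Fin 4) (1 : ℤ)) := by
  have hval : Pi.single 0 1 ⬝ᵥ epsLmat α *ᵥ Pi.single (0 : Fin 4) (1 : ℤ) = α * (α + 1) + 1 := by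
    simp only [epsLmat, mulVec_single, MulOpposite.op_one, one_smul, single_dotProduct, col_apply,
      of_apply, cons_val', cons_val_zero, cons_val_fin_one, one_mul]
    ring
  rw [hval]
  exact (Int.even_mul_succ_self α).add_one

def epsLmatShear (k : ℤ) : Matrix (Fin 4) (Fin 4) ℤ :=
  !![1, 0, 0, 0; 0, 1, 0, 0; k, k, 1, 0; k, k, 0, 1]

theorem epsLmatShear_transpose_mul_epsLmat_mul (α k : ℤ) :
    (epsLmatShear k)ᵀ * epsLmat α * epsLmatShear k = epsLmat (α + 2 * k) := by
  ext i j
  fin_cases i <;> fin_cases j <;>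
    simp only [epsLmatShear, epsLmat, mul_apply, transpose_apply, of_apply, cons_val',
      cons_val, cons_val_zero, cons_val_one, cons_val_fin_one, Fin.sum_univ_four, Fin.zero_eta,
      Fin.mk_one, Fin.reduceFinMk, Fin.isValue] <;> ring

theorem exists_mul_epsLmat_mul_transpose_eq_one (α : ℤ) :
    ∃ P : Matrix (Fin 4) (Fin 4) ℤ, P * epsLmat α * Pᵀ = 1 := by
  obtain ⟨P, hP⟩ : ∃ P : Matrix (Fin 4) (Fin 4) ℤ, P * epsLmat (α % 2) * Pᵀ = 1 := by
    rcases Int.emod_two_eq_zero_or_one α with h | h <;> rw [h]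
    · exact ⟨!![1, 0, 0, 0; 0, 1, 0, 0; 1, 0, -1, 0; 0, 1, 0, -1], by decide⟩
    · exact ⟨!![1, 0, -1, 0; 0, 1, 0, -1; 1, 0, -1, -1; 0, 1, -1, -1], by decide⟩
  set S := epsLmatShear (-(α / 2))
  refine ⟨P * Sᵀ, ?_⟩
  calc P * Sᵀ * epsLmat α * (P * Sᵀ)ᵀ = P * (Sᵀ * epsLmat α * S) * Pᵀ := by
        simp only [transpose_mul, transpose_transpose, Matrix.mul_assoc]
    _ = P * epsLmat (α % 2) * Pᵀ := by
        rw [epsLmatShear_transpose_mul_epsLmat_mul, Int.emod_def, sub_eq_add_neg, mul_neg]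
    _ = 1 := hP

theorem stmt_14_general (a : Lau) :
    (∃ v : Fin 4 → ℤ, Odd (v ⬝ᵥ (epsLmat (aug a)).mulVec v)) ∧
    (∀ v : Fin 4 → ℤ, v ≠ 0 → 0 < v ⬝ᵥ (epsLmat (aug a)).mulVec v) ∧
    IsUnit (epsLmat (aug a)).det ∧
    ∃ P : Matrix (Fin 4) (Fin 4) ℤ, IsUnit P.det ∧ P * epsLmat (aug a) * Pᵀ = 1 := by
  obtain ⟨P, hP⟩ := exists_mul_epsLmat_mul_transpose_eq_one (aug a)
  have hunit := isUnit_det_of_mul_mul_transpose_eq_one hP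
  exact ⟨⟨_, odd_dotProduct_epsLmat_mulVec_single _⟩, fun _ ↦ dotProduct_epsLmat_mulVec_pos _,
    hunit.2, P, hunit.1, hP⟩

/-- For any self-conjugate `a ∈ ℤ[x,x⁻¹]`, the augmented integer matrix `ε(L(a))`
is odd, positive definite and unimodular of rank 4, hence congruent over `ℤ` to the
identity matrix. -/
theorem stmt_14 (a : Lau) (hconj : Finsupp.mapDomain (fun d : ℤ => -d) a.coeff = a.coeff) :
    (∃ v : Fin 4 → ℤ, Odd (v ⬝ᵥ (epsLmat (aug a)).mulVec v)) ∧
    (∀ v : Fin 4 → ℤ, v ≠ 0 → 0 < v ⬝ᵥ (epsLmat (aug a)).mulVec v) ∧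
    IsUnit (epsLmat (aug a)).det ∧
    ∃ P : Matrix (Fin 4) (Fin 4) ℤ, IsUnit P.det ∧ P * epsLmat (aug a) * Pᵀ = 1 :=
  stmt_14_general a

end
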